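/- arXiv:2109.06269 — 7 statements merged into one kernel-verified Lean document; each statement's English description precedes it below -/
import Mathlib

section
/- If X is a star set for a nonzero eigenvalue λ of a connected graph G, then the star complement V(G)\X is a dominating set of G. -/
open Matrix SimpleGraph

variable {V : Type*} [Fintype V] [DecidableEq V]

/-- Adjacency matrix of a simple graph over ℝ (classically decidable). -/
noncomputable def adjM (G : SimpleGraph V) : Matrix V V ℝ :=
  letI := Classical.decRel G.Adj
  G.adjMatrix ℝ

/-- Multiplicity of `lam` as an adjacency eigenvalue of `G`. -/
noncomputable def eigMult (G : SimpleGraph V) (lam : ℝ) : ℕ :=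
  Module.finrank ℝ (LinearMap.ker (Matrix.toLin' (adjM G - lam • (1 : Matrix V V ℝ))))

/-- `D` is a dominating set of `G`. -/
def IsDomSet (G : SimpleGraph V) (D : Finset V) : Prop :=
  ∀ v ∉ D, ∃ u ∈ D, G.Adj v u

/-- Domination number. -/
noncomputable def domNum (G : SimpleGraph V) : ℕ :=
  sInf {k | ∃ D : Finset V, IsDomSet G D ∧ D.card = k}

/-- `D` is a total dominating set of `G`. -/
def IsTotalDomSet (G : SimpleGraph V) (D : Finset V) : Prop :=
  ∀ v : V, ∃ u ∈ D, G.Adj v u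

/-- Total domination number. -/
noncomputable def totalDomNum (G : SimpleGraph V) : ℕ :=
  sInf {k | ∃ D : Finset V, IsTotalDomSet G D ∧ D.card = k}

/-- `D` is a `p`-dominating set of `G`. -/
def IsPDomSet (G : SimpleGraph V) (p : ℕ) (D : Finset V) : Prop :=
  ∀ v ∉ D, p ≤ (G.neighborSet v ∩ ↑D).ncard

/-- `p`-domination number. -/
noncomputable def pDomNum (G : SimpleGraph V) (p : ℕ) : ℕ :=
  sInf {k | ∃ D : Finset V, IsPDomSet G p D ∧ D.card = k}

/-- `X` is a star set for the eigenvalue `lam` of `G`: `lam` is an eigenvalue of `G`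
with multiplicity `|X|`, and `lam` is not an eigenvalue of the induced subgraph `G - X`. -/
def IsStarSet (G : SimpleGraph V) (lam : ℝ) (X : Finset V) : Prop :=
  0 < eigMult G lam ∧ eigMult G lam = X.card ∧
    ∀ α : {v : V // v ∉ X} → ℝ,
      (Matrix.of fun i j : {v : V // v ∉ X} => adjM G i.1 j.1).mulVec α = lam • α → α = 0

/-- Minimum degree. -/
noncomputable def minDeg (G : SimpleGraph V) : ℕ :=
  sInf {d | ∃ v : V, (G.neighborSet v).ncard = d}

/-- Number of distinct adjacency eigenvalues of `G`. -/
noncomputable def numEigs (G : SimpleGraph V) : ℕ :=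
  {lam : ℝ | 0 < eigMult G lam}.ncard

/-!
Restricting eigenvectors of `lam` to a star set `X` is injective, since an eigenvector vanishing
on `X` restricts to an eigenvector of `G - X`; as the eigenspace has dimension `|X|`, it is
bijective. So for `v ∈ X` there is an eigenvector `x` with `x v = 1` and `x = 0` on `X \ {v}`.
If `v` had no neighbour outside `X`, then `lam = lam * x v = ∑_{w ~ v} x w = 0`.
-/

theorem mem_ker_adjM_sub_smul_iff (G : SimpleGraph V) (lam : ℝ) (x : V → ℝ) :
    x ∈ LinearMap.ker (Matrix.toLin' (adjM G - lam • (1 : Matrix V V ℝ))) ↔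
      adjM G *ᵥ x = lam • x := by
  rw [LinearMap.mem_ker, Matrix.toLin'_apply, Matrix.sub_mulVec, sub_eq_zero,
    Matrix.smul_mulVec, Matrix.one_mulVec]

namespace IsStarSet

variable {G : SimpleGraph V} {lam : ℝ} {X : Finset V}

theorem eq_zero_of_eigenvector_of_eqOn_zero (hX : IsStarSet G lam X) {x : V → ℝ}
    (hx : adjM G *ᵥ x = lam • x) (hxX : ∀ w ∈ X, x w = 0) : x = 0 := by
  classical
  have hrestrict : (fun i : {v : V // v ∉ X} => x i) = 0 := by
    refine hX.2.2 _ (funext fun i => ?_)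
    have hsupp : ∑ w, adjM G i w * x w = ∑ j : {v : V // v ∉ X}, adjM G i j * x j := by
      rw [← Finset.sum_subset (Finset.subset_univ Xᶜ) fun w _ hw => by
          rw [hxX w (by simpa using hw), mul_zero]]
      exact Finset.sum_subtype _ (fun _ => Finset.mem_compl) _
    simpa [Matrix.mulVec, dotProduct, ← hsupp] using congrFun hx i
  funext w
  by_cases hw : w ∈ X
  · exact hxX w hw
  · exact congrFun hrestrict ⟨w, hw⟩

theorem exists_eigenvector_eqOn (hX : IsStarSet G lam X) (f : V → ℝ) :
    ∃ x : V → ℝ, adjM G *ᵥ x = lam • x ∧ ∀ w ∈ X, x w = f w := by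
  set K := LinearMap.ker (Matrix.toLin' (adjM G - lam • (1 : Matrix V V ℝ)))
  let restrict : K →ₗ[ℝ] (X → ℝ) := (LinearMap.funLeft ℝ ℝ Subtype.val).comp K.subtype
  have hinj : Function.Injective restrict := by
    refine (injective_iff_map_eq_zero restrict).2 fun x hx => Subtype.ext ?_
    exact hX.eq_zero_of_eigenvector_of_eqOn_zero ((mem_ker_adjM_sub_smul_iff ..).1 x.2)
      fun w hw => congrFun hx ⟨w, hw⟩
  have hdim : Module.finrank ℝ K = Module.finrank ℝ (X → ℝ) := by
    rw [Module.finrank_fintype_fun_eq_card, Fintype.card_coe]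
    exact hX.2.1
  obtain ⟨x, hx⟩ :=
    (LinearMap.injective_iff_surjective_of_finrank_eq_finrank hdim).1 hinj fun w => f w
  exact ⟨x, (mem_ker_adjM_sub_smul_iff ..).1 x.2, fun w hw => congrFun hx ⟨w, hw⟩⟩

end IsStarSet

theorem stmt_0_general (G : SimpleGraph V) (lam : ℝ) (hlam : lam ≠ 0)
    (X : Finset V) (hX : IsStarSet G lam X) :
    IsDomSet G Xᶜ := by
  classical
  intro v hv
  rw [Finset.mem_compl, not_not] at hv
  by_contra! hisolated
  obtain ⟨x, hx, hxX⟩ := hX.exists_eigenvector_eqOn (Pi.single v 1)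
  have hnbr : ∀ w, G.Adj v w → x w = 0 := fun w hadj => by
    have hwX : w ∈ X := by simpa using mt (hisolated w) (not_not.2 hadj)
    rw [hxX w hwX, Pi.single_eq_of_ne hadj.ne.symm]
  have hv_eq := congrFun hx v
  rw [adjM, adjMatrix_mulVec_apply,
    Finset.sum_eq_zero fun w hw => hnbr w ((mem_neighborFinset ..).1 hw),
    Pi.smul_apply, hxX v hv, Pi.single_eq_same, smul_eq_mul, mul_one] at hv_eq
  exact hlam hv_eq.symm

theorem stmt_0 (G : SimpleGraph V) (hG : G.Connected) (lam : ℝ) (hlam : lam ≠ 0)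
    (X : Finset V) (hX : IsStarSet G lam X) :
    IsDomSet G Xᶜ :=
  stmt_0_general G lam hlam X hX
end

section
/- Let G be a connected graph of order n with G ≠ K_n, and let λ be an adjacency eigenvalue of G with multiplicity m_G(λ). Then the total domination number satisfies γ_t(G) ≤ n − m_G(λ). -/
open Matrix SimpleGraph

variable {V : Type*} [Fintype V] [DecidableEq V]

/-!
Let `M = A - λI` and pick `S` so that the columns of `M` indexed by `S` form a basis of its column
space; then `|S| = n - m_G(λ)`. As `M` is symmetric, the rows indexed by `S` cut out `ker M`, and
testing this on `e_x` shows that every `x ∉ S` has a neighbour in `S`. A vertex `v ∈ S` without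
neighbour in `S` is exchanged for a neighbour `x` that is adjacent to `S - v`, which keeps the
column basis (row `v` sees only `x`). If no such `x` exists, testing `λ e_x + e_v` gives `λ² = 1`
and makes every neighbour of `v` a closed twin of `v`, so `G` is complete.
-/

section ColumnBasis

theorem LinearIndepOn.finrank_span_image_finset {K ι E : Type*} [Field K] [AddCommGroup E]
    [Module K E] {f : ι → E} {S : Finset ι} (h : LinearIndepOn K f (S : Set ι)) :
    Module.finrank K (Submodule.span K (f '' S)) = S.card := by
  rw [Set.image_eq_range, finrank_span_eq_card h]
  simp

variable {K ι : Type*} [Field K] [Fintype ι]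

/-- For `M = A - λ • 1`, this says that `Sᶜ` is a star set for `λ`. -/
def IsColBasis (M : Matrix ι ι K) (S : Finset ι) : Prop :=
  LinearIndepOn K M.col (S : Set ι) ∧ S.card = M.rank

theorem exists_isColBasis (M : Matrix ι ι K) : ∃ S, IsColBasis M S := by
  classical
  obtain ⟨b, -, -, hspan, hb⟩ :=
    exists_linearIndepOn_extension (linearIndepOn_empty K M.col) (Set.empty_subset Set.univ)
  have hfin : b.Finite := b.toFinite
  refine ⟨hfin.toFinset, by rwa [Set.Finite.coe_toFinset], ?_⟩
  have hb' : LinearIndepOn K M.col (hfin.toFinset : Set ι) := by rwa [Set.Finite.coe_toFinset]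
  have hspan' : Submodule.span K (Set.range M.col) = Submodule.span K (M.col '' b) :=
    le_antisymm (Submodule.span_le.mpr (Set.image_univ ▸ hspan))
      (Submodule.span_mono (Set.image_subset_range _ _))
  rw [← hb'.finrank_span_image_finset, rank_eq_finrank_span_cols, hspan', Set.Finite.coe_toFinset]

namespace IsColBasis

variable {M : Matrix ι ι K} {S : Finset ι}

theorem span_image_eq (hS : IsColBasis M S) :
    Submodule.span K (M.col '' S) = Submodule.span K (Set.range M.col) :=
  Submodule.eq_of_le_of_finrank_eq (Submodule.span_mono (Set.image_subset_range _ _)) <| by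
    rw [hS.1.finrank_span_image_finset, hS.2, rank_eq_finrank_span_cols]

/-- For symmetric `M`, the rows indexed by `S` span the row space, so they cut out `ker M`. -/
theorem mulVec_eq_zero (hM : M.IsSymm) (hS : IsColBasis M S) {u : ι → K}
    (hu : ∀ s ∈ S, (M *ᵥ u) s = 0) : M *ᵥ u = 0 := by
  have hrow : ∀ t, (M *ᵥ u) t = (dotProductBilin K K).flip u (M.col t) := fun t => by
    simp only [LinearMap.flip_apply, dotProductBilin_apply_apply]
    exact congrArg (· ⬝ᵥ u) (funext fun j => hM.apply j t)
  have hle :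
      Submodule.span K (Set.range M.col) ≤ LinearMap.ker ((dotProductBilin K K).flip u) := by
    rw [← hS.span_image_eq, Submodule.span_le]
    rintro _ ⟨s, hs, rfl⟩
    exact (hrow s).symm.trans (hu s hs)
  funext t
  exact (hrow t).trans (hle (Submodule.subset_span ⟨t, rfl⟩))

theorem col_eq_zero [DecidableEq ι] (hM : M.IsSymm) (hS : IsColBasis M S) {x : ι}
    (hx : ∀ s ∈ S, M s x = 0) : M.col x = 0 := by
  rw [← mulVec_single_one]
  exact hS.mulVec_eq_zero hM fun s hs => by simpa using hx s hs

theorem exchange [DecidableEq ι] (hS : IsColBasis M S) {v x : ι} (hv : v ∈ S) (hx : x ∉ S)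
    (hvx : M v x ≠ 0) (hvS : ∀ t ∈ S, t ≠ v → M v t = 0) :
    IsColBasis M (insert x (S.erase v)) := by
  refine ⟨?_, ?_⟩
  · rw [Finset.coe_insert]
    refine (hS.1.mono (by simp)).insert fun hmem => hvx ?_
    have hle :
        Submodule.span K (M.col '' (S.erase v : Set ι)) ≤ LinearMap.ker (LinearMap.proj v) := by
      rw [Submodule.span_le]
      rintro _ ⟨t, ht, rfl⟩
      simp only [Finset.coe_erase, Set.mem_sdiff, Finset.mem_coe, Set.mem_singleton_iff] at ht
      exact hvS t ht.1 ht.2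
    exact hle hmem
  · rw [Finset.card_insert_of_notMem (fun h => hx (Finset.mem_of_mem_erase h)),
      Finset.card_erase_add_one hv, hS.2]

end IsColBasis

end ColumnBasis

theorem SimpleGraph.Preconnected.eq_top_of_adj_iff_adj {ι : Type*} {G : SimpleGraph ι}
    (hG : G.Preconnected) {v : ι}
    (h : ∀ x, G.Adj v x → ∀ y, y ≠ x → y ≠ v → (G.Adj y x ↔ G.Adj y v)) : G = ⊤ := by
  have hN : ∀ a, a = v ∨ G.Adj v a := fun a => by
    induction (reachable_iff_reflTransGen v a).mp (hG v a) with
    | refl => exact .inl rfl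
    | @tail b c _ hbc ih =>
      by_cases hcv : c = v
      · exact .inl hcv
      rcases ih with rfl | hvb
      · exact .inr hbc
      · exact .inr ((h b hvb c hbc.ne' hcv).mp hbc.symm).symm
  ext a b
  refine ⟨Adj.ne, fun hab => ?_⟩
  rcases hN a with rfl | hva <;> rcases hN b with rfl | hvb
  · exact absurd rfl hab
  · exact hvb
  · exact hva.symm
  · exact (h b hvb a hab hva.ne').mpr hva.symm

section AdjacencyShift

variable {ι : Type*} [DecidableEq ι] (G : SimpleGraph ι) (lam : ℝ)

theorem adjM_sub_smul_one_apply_self (i : ι) : (adjM G - lam • 1) i i = -lam := by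
  classical
  simp [adjM]

variable {G} in
theorem adjM_sub_smul_one_apply_of_adj {i j : ι} (h : G.Adj i j) :
    (adjM G - lam • 1) i j = 1 := by
  classical
  simp [adjM, h, h.ne]

variable {G} in
theorem adjM_sub_smul_one_apply_of_not_adj {i j : ι} (hij : i ≠ j) (h : ¬G.Adj i j) :
    (adjM G - lam • 1) i j = 0 := by
  classical
  simp [adjM, h, hij]

theorem isSymm_adjM_sub_smul_one : (adjM G - lam • 1).IsSymm :=
  letI := Classical.decRel G.Adj
  (isSymm_adjMatrix G).sub (isSymm_one.smul lam)

end AdjacencyShift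

section IsolatedIn

variable {ι : Type*} {G : SimpleGraph ι} [DecidableRel G.Adj]

variable (G) in
def isolatedIn (S : Finset ι) : Finset ι :=
  {u ∈ S | ∀ s ∈ S, ¬G.Adj u s}

theorem card_isolatedIn_exchange_lt [DecidableEq ι] {S : Finset ι} {v x s : ι}
    (hv : v ∈ isolatedIn G S) (hs : s ∈ S) (hsv : s ≠ v) (hxs : G.Adj x s) :
    (isolatedIn G (insert x (S.erase v))).card < (isolatedIn G S).card := by
  refine Finset.card_lt_card (lt_of_le_of_lt (fun u hu => ?_) (Finset.erase_ssubset hv))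
  simp only [isolatedIn, Finset.mem_filter, Finset.mem_insert, Finset.mem_erase] at hu hv ⊢
  obtain ⟨hu | ⟨huv, huS⟩, hiso⟩ := hu
  · exact absurd hxs (hu ▸ hiso s (.inr ⟨hsv, hs⟩))
  refine ⟨huv, huS, fun t ht htu => ?_⟩
  by_cases htv : t = v
  · exact hv.2 u huS (htv ▸ htu).symm
  · exact hiso t (.inr ⟨htv, ht⟩) htu

end IsolatedIn

section StarComplement

variable {ι : Type*} [Fintype ι] [DecidableEq ι] {G : SimpleGraph ι} {lam : ℝ}

theorem exists_adj_mem_of_isColBasis {S : Finset ι} (hS : IsColBasis (adjM G - lam • 1) S)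
    {x y : ι} (hx : x ∉ S) (hxy : G.Adj x y) : ∃ s ∈ S, G.Adj x s := by
  by_contra! h
  have hcol := congrFun (hS.col_eq_zero (isSymm_adjM_sub_smul_one G lam) fun s hs =>
    adjM_sub_smul_one_apply_of_not_adj lam (ne_of_mem_of_not_mem hs hx)
      fun hsx => h s hs hsx.symm) y
  simp [adjM_sub_smul_one_apply_of_adj lam hxy.symm] at hcol

theorem adj_iff_adj_of_isColBasis {S : Finset ι} (hS : IsColBasis (adjM G - lam • 1) S)
    {v x : ι} (hvN : ∀ s ∈ S, ¬G.Adj v s) (hvx : G.Adj v x) (hxN : ∀ s ∈ S, s ≠ v → ¬G.Adj x s)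
    {y : ι} (hyx : y ≠ x) (hyv : y ≠ v) : G.Adj y x ↔ G.Adj y v := by
  have hx : x ∉ S := fun h => hvN x h hvx
  -- `lam • e_x + e_v` is killed by the rows in `S`, hence lies in `ker M`.
  have hker : ∀ t, lam * (adjM G - lam • 1) t x + (adjM G - lam • 1) t v = 0 := fun t => by
    have := congrFun (hS.mulVec_eq_zero (u := lam • Pi.single x 1 + Pi.single v 1)
      (isSymm_adjM_sub_smul_one G lam) fun s hs => ?_) t
    · simpa only [mulVec_add, mulVec_smul, mulVec_single_one, Pi.add_apply, Pi.smul_apply,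
        col_apply, smul_eq_mul, Pi.zero_apply] using this
    simp only [mulVec_add, mulVec_smul, mulVec_single_one, Pi.add_apply, Pi.smul_apply,
      col_apply, smul_eq_mul]
    by_cases hsv : s = v
    · subst hsv
      rw [adjM_sub_smul_one_apply_of_adj lam hvx, adjM_sub_smul_one_apply_self]
      ring
    · rw [adjM_sub_smul_one_apply_of_not_adj lam (ne_of_mem_of_not_mem hs hx)
          fun h => hxN s hs hsv h.symm,
        adjM_sub_smul_one_apply_of_not_adj lam hsv fun h => hvN s hs h.symm]
      ring
  have hsq : lam * lam = 1 := by
    have := hker x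
    rw [adjM_sub_smul_one_apply_self, adjM_sub_smul_one_apply_of_adj lam hvx.symm] at this
    linarith
  have hy := hker y
  by_cases hyx' : G.Adj y x <;> by_cases hyv' : G.Adj y v <;>
    simp only [adjM_sub_smul_one_apply_of_adj, adjM_sub_smul_one_apply_of_not_adj,
      hyx, hyv, hyx', hyv', ne_eq, not_false_eq_true] at hy ⊢ <;> nlinarith

theorem exists_isTotalDomSet_of_isColBasis [DecidableRel G.Adj] (hG : G.Connected) (hne : G ≠ ⊤)
    {S : Finset ι} (hS : IsColBasis (adjM G - lam • 1) S) :
    ∃ D, IsTotalDomSet G D ∧ D.card = S.card := by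
  have : Nontrivial ι := not_subsingleton_iff_nontrivial.mp fun h =>
    hne (SimpleGraph.subsingleton_iff.mpr h |>.elim _ _)
  by_cases hiso : ∃ v, v ∈ isolatedIn G S
  · obtain ⟨v, hv⟩ := hiso
    obtain ⟨hvS, hvN⟩ : v ∈ S ∧ ∀ s ∈ S, ¬G.Adj v s := by simpa [isolatedIn] using hv
    obtain ⟨x, hvx, s, hs, hsv, hxs⟩ : ∃ x, G.Adj v x ∧ ∃ s ∈ S, s ≠ v ∧ G.Adj x s := by
      by_contra! h
      exact hne <| hG.preconnected.eq_top_of_adj_iff_adj fun x hvx _ hyx hyv =>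
        adj_iff_adj_of_isColBasis hS hvN hvx (h x hvx) hyx hyv
    have hx : x ∉ S := fun h => hvN x h hvx
    have hS' := hS.exchange hvS hx (by simp [adjM_sub_smul_one_apply_of_adj lam hvx])
      fun t ht htv => adjM_sub_smul_one_apply_of_not_adj lam htv.symm (hvN t ht)
    obtain ⟨D, hD, hDS⟩ := exists_isTotalDomSet_of_isColBasis hG hne hS'
    refine ⟨D, hD, hDS.trans ?_⟩
    rw [Finset.card_insert_of_notMem (fun h => hx (Finset.mem_of_mem_erase h)),
      Finset.card_erase_add_one hvS]
  · push Not at hiso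
    refine ⟨S, fun y => ?_, rfl⟩
    by_cases hy : y ∈ S
    · by_contra! h
      exact hiso y (by simpa [isolatedIn, hy] using h)
    · obtain ⟨z, hyz⟩ := hG.preconnected.exists_adj_of_nontrivial y
      exact exists_adj_mem_of_isColBasis hS hy hyz
termination_by (isolatedIn G S).card
decreasing_by exact card_isolatedIn_exchange_lt hv hs hsv hxs

end StarComplement

theorem eigMult_add_rank {ι : Type*} [Fintype ι] [DecidableEq ι] (G : SimpleGraph ι)
    (lam : ℝ) : eigMult G lam + (adjM G - lam • 1).rank = Fintype.card ι := by
  rw [eigMult, Matrix.toLin'_apply', Matrix.rank, add_comm,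
    LinearMap.finrank_range_add_finrank_ker, Module.finrank_fintype_fun_eq_card]

theorem stmt_2_general (G : SimpleGraph V) (hG : G.Connected) (hne : G ≠ ⊤) (lam : ℝ) :
    totalDomNum G ≤ Fintype.card V - eigMult G lam := by
  classical
  obtain ⟨S, hS⟩ := exists_isColBasis (adjM G - lam • 1)
  obtain ⟨D, hD, hDS⟩ := exists_isTotalDomSet_of_isColBasis hG hne hS
  have hrank := eigMult_add_rank G lam
  exact Nat.sInf_le ⟨D, hD, by rw [hDS, hS.2]; omega⟩

theorem stmt_2 (G : SimpleGraph V) (hG : G.Connected) (hne : G ≠ ⊤) (lam : ℝ)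
    (heig : 0 < eigMult G lam) :
    totalDomNum G ≤ Fintype.card V - eigMult G lam :=
  stmt_2_general G hG hne lam
end

section
/- If B and C are symmetric 0-1 matrices of the same size γ ≥ 2 with zero diagonal, B is the adjacency matrix of a connected graph, and (B + I)(C + I) = I, then a contradiction follows; i.e., no such pair exists with γ ≥ 2. -/
open Matrix SimpleGraph

variable {V : Type*} [Fintype V] [DecidableEq V]

/-!
Expanding, `(B + 1)(C + 1) = 1` says `BC + B + C = 0`. All three summands have nonnegative
entries, so `B = 0`; the graph of `B` is then edgeless, and an edgeless graph on at least
two vertices is disconnected.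
-/

namespace Matrix

theorem eq_zero_of_add_one_mul_add_one_eq_one {n R : Type*} [Fintype n] [DecidableEq n]
    [Ring R] [PartialOrder R] [IsOrderedRing R] {A B : Matrix n n R}
    (hA : ∀ i j, 0 ≤ A i j) (hB : ∀ i j, 0 ≤ B i j) (h : (A + 1) * (B + 1) = 1) : A = 0 := by
  have hsum : A * B + A + B = 0 := by
    calc A * B + A + B = (A + 1) * (B + 1) - 1 := by noncomm_ring
      _ = 0 := by rw [h, sub_self]
  ext i j
  have hAB : 0 ≤ (A * B) i j :=
    Finset.sum_nonneg fun k _ => mul_nonneg (hA i k) (hB k j)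
  have hij : (A * B) i j + A i j + B i j = 0 := by
    simpa using congrFun (congrFun hsum i) j
  rw [add_eq_zero_iff_of_nonneg (add_nonneg hAB (hA i j)) (hB i j),
    add_eq_zero_iff_of_nonneg hAB (hA i j)] at hij
  exact hij.1.2

namespace IsAdjMatrix

theorem nonneg {n α : Type*} [Zero α] [One α] [Preorder α] [ZeroLEOneClass α]
    {A : Matrix n n α} (hA : A.IsAdjMatrix) (i j : n) : 0 ≤ A i j := by
  rcases hA.zero_or_one i j with h | h <;> simp [h]

theorem toGraph_zero {n α : Type*} [MulZeroOneClass α] [Nontrivial α]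
    (h : (0 : Matrix n n α).IsAdjMatrix) : h.toGraph = ⊥ := by
  ext
  simp

end IsAdjMatrix

end Matrix

theorem stmt_4 (γ : ℕ) (hγ : 2 ≤ γ) (B C : Matrix (Fin γ) (Fin γ) ℝ)
    (hB : B.IsAdjMatrix) (hC : C.IsAdjMatrix) (hconn : hB.toGraph.Connected)
    (h : (B + 1) * (C + 1) = 1) : False := by
  have hB0 : B = 0 := eq_zero_of_add_one_mul_add_one_eq_one hB.nonneg hC.nonneg h
  subst hB0
  rw [IsAdjMatrix.toGraph_zero, connected_bot_iff] at hconn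
  have : Nontrivial (Fin γ) := Fin.nontrivial_iff_two_le.mpr hγ
  exact not_subsingleton (Fin γ) hconn.1
end

section
/- If B and C are adjacency matrices of graphs on γ vertices, the graph of B is connected, and BC = I, then γ = 2. -/
/-!
Since `B` and `C = B⁻¹` are both entrywise nonnegative, each row of `B` has exactly one
nonzero entry: if `B i m ≠ 0`, the vanishing off-diagonal entries of `B * C` force row `m`
of `C` to be supported on column `i`, and then the vanishing off-diagonal entries of `C * B`
force row `i` of `B` to be supported on column `m`. So every vertex of the graph of `B` has
exactly one neighbour, and a connected graph with this property is a single edge.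
-/

open Matrix SimpleGraph

variable {V : Type*} [Fintype V] [DecidableEq V]

namespace Matrix

variable {n R : Type*} [Fintype n] [DecidableEq n]
  [CommRing R] [LinearOrder R] [IsStrictOrderedRing R] {B C : Matrix n n R}

theorem exists_ne_zero_of_mul_eq_one (h : B * C = 1) (i : n) : ∃ k, B i k ≠ 0 := by
  by_contra! hrow
  have hii := congrFun (congrFun h i) i
  simp [mul_apply, hrow] at hii

theorem apply_eq_zero_of_mul_eq_one_of_nonneg (hB : ∀ i j, 0 ≤ B i j) (hC : ∀ i j, 0 ≤ C i j)
    (h : B * C = 1) {i m j : n} (hBim : B i m ≠ 0) (hji : j ≠ i) : C m j = 0 := by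
  have hij : ∑ k, B i k * C k j = 0 := by
    simpa [mul_apply, hji.symm] using congrFun (congrFun h i) j
  have hterm := (Finset.sum_eq_zero_iff_of_nonneg fun k _ ↦ mul_nonneg (hB i k) (hC k j)).mp
    hij m (Finset.mem_univ m)
  exact (mul_eq_zero.mp hterm).resolve_left hBim

theorem apply_ne_zero_of_mul_eq_one_of_nonneg (hB : ∀ i j, 0 ≤ B i j) (hC : ∀ i j, 0 ≤ C i j)
    (h : B * C = 1) {i m : n} (hBim : B i m ≠ 0) : C m i ≠ 0 := by
  intro hCmi
  obtain ⟨j, hCmj⟩ := exists_ne_zero_of_mul_eq_one (mul_eq_one_comm.mp h) m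
  have hji : j ≠ i := by rintro rfl; exact hCmj hCmi
  exact hCmj (apply_eq_zero_of_mul_eq_one_of_nonneg hB hC h hBim hji)

theorem eq_of_mul_eq_one_of_nonneg (hB : ∀ i j, 0 ≤ B i j) (hC : ∀ i j, 0 ≤ C i j)
    (h : B * C = 1) {i k k' : n} (hk : B i k ≠ 0) (hk' : B i k' ≠ 0) : k' = k := by
  by_contra hne
  have hCki := apply_ne_zero_of_mul_eq_one_of_nonneg hB hC h hk
  exact hk' (apply_eq_zero_of_mul_eq_one_of_nonneg hC hB (mul_eq_one_comm.mp h) hCki hne)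

end Matrix

theorem Matrix.IsAdjMatrix.nonneg_s5 {n R : Type*} [Semiring R] [PartialOrder R]
    [ZeroLEOneClass R] {A : Matrix n n R} (hA : A.IsAdjMatrix) (i j : n) : 0 ≤ A i j := by
  rcases hA.zero_or_one i j with h | h <;> simp [h]

theorem SimpleGraph.Connected.card_eq_two_of_adj_unique {G : SimpleGraph V} (hG : G.Connected)
    (huniq : ∀ v w w', G.Adj v w → G.Adj v w' → w' = w)
    {u v : V} (huv : G.Adj u v) : Fintype.card V = 2 := by
  have hclosed : ∀ x y, G.Adj x y → x = u ∨ x = v → y = u ∨ y = v := by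
    rintro x y hxy (rfl | rfl)
    · exact Or.inr (huniq _ _ _ huv hxy)
    · exact Or.inl (huniq _ _ _ huv.symm hxy)
  have hall : ∀ w, w = u ∨ w = v := by
    intro w
    induction (reachable_iff_reflTransGen u w).mp (hG u w) with
    | refl => exact Or.inl rfl
    | tail _ hxy ih => exact hclosed _ _ hxy ih
  rw [← Finset.card_univ, Finset.card_eq_two]
  exact ⟨u, v, huv.ne, (Finset.eq_univ_iff_forall.mpr fun w ↦ by simpa using hall w).symm⟩

theorem stmt_5 (γ : ℕ) (B C : Matrix (Fin γ) (Fin γ) ℝ)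
    (hB : B.IsAdjMatrix) (hC : C.IsAdjMatrix) (hconn : hB.toGraph.Connected)
    (h : B * C = 1) : γ = 2 := by
  have hadj : ∀ i j, hB.toGraph.Adj i j ↔ B i j ≠ 0 := fun i j ↦ by
    rw [hB.toGraph_adj, ne_eq, hB.apply_ne_zero_iff]
  obtain ⟨v⟩ := hconn.nonempty
  obtain ⟨w, hvw⟩ := Matrix.exists_ne_zero_of_mul_eq_one h v
  have hcard := hconn.card_eq_two_of_adj_unique
    (fun i k k' hk hk' ↦ Matrix.eq_of_mul_eq_one_of_nonneg hB.nonneg_s5 hC.nonneg_s5 h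
      ((hadj i k).mp hk) ((hadj i k').mp hk'))
    ((hadj v w).mpr hvw)
  simpa using hcard
end

section
/- Let G be a graph of order n with minimum degree δ(G) and s distinct adjacency eigenvalues, and let p ≤ δ(G) be a positive integer with s ≥ n − δ(G) + p. If X is a star set for any eigenvalue λ of G, then V(G)\X is a p-dominating set of G. -/
open Matrix SimpleGraph

variable {V : Type*} [Fintype V] [DecidableEq V]

/-! Eigenvectors for distinct eigenvalues are linearly independent and independent of the
`λ`-eigenspace, so `mult(λ) + (s - 1) ≤ n`; together with `s ≥ n - δ + p` this bounds the star
set by `|X| ≤ δ - p + 1`. A vertex of `X` thus has at most `|X| - 1 ≤ δ - p` neighbours inside `X`,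
hence at least `p` outside. -/

open Module

theorem Module.End.finrank_eigenspace_add_card_le {K M : Type*} [Field K] [AddCommGroup M]
    [Module K M] [FiniteDimensional K M] (f : End K M) (μ : K) (S : Finset K) (hμ : μ ∉ S)
    (hS : ∀ ν ∈ S, f.HasEigenvalue ν) :
    finrank K (f.eigenspace μ) + S.card ≤ finrank K M := by
  have hv (ν : S) : ∃ v, f.HasEigenvector ν v := (hS ν ν.2).exists_hasEigenvector
  choose v hv using hv
  have hli : LinearIndependent K v :=
    (f.eigenspaces_iSupIndep.comp Subtype.coe_injective).linearIndependent _
      (fun ν => (hv ν).1) (fun ν => (hv ν).2)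
  have hspan : Submodule.span K (Set.range v) ≤ ⨆ ν ∈ S, f.eigenspace ν := by
    rw [Submodule.span_le, Set.range_subset_iff]
    intro ν
    exact (le_biSup (fun ν => f.eigenspace ν) ν.2) (hv ν).1
  have hdisj : Disjoint (f.eigenspace μ) (Submodule.span K (Set.range v)) :=
    (f.eigenspaces_iSupIndep.disjoint_biSup hμ).mono_right hspan
  calc finrank K (f.eigenspace μ) + S.card
      = finrank K (f.eigenspace μ) + finrank K (Submodule.span K (Set.range v)) := by
        rw [finrank_span_eq_card hli, Fintype.card_coe]
    _ ≤ finrank K M := Submodule.finrank_add_finrank_le_of_disjoint hdisj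

lemma eigMult_eq_finrank_eigenspace (G : SimpleGraph V) (μ : ℝ) :
    eigMult G μ = finrank ℝ (End.eigenspace (toLin' (adjM G)) μ) := by
  rw [eigMult, End.eigenspace_def, map_sub, map_smul, toLin'_one]
  rfl

lemma eigMult_pos_iff (G : SimpleGraph V) (μ : ℝ) :
    0 < eigMult G μ ↔ End.HasEigenvalue (toLin' (adjM G)) μ := by
  rw [eigMult_eq_finrank_eigenspace, End.hasEigenvalue_iff, Nat.pos_iff_ne_zero, ne_eq,
    Submodule.finrank_eq_zero]

theorem eigMult_add_numEigs_le (G : SimpleGraph V) {lam : ℝ} (hlam : 0 < eigMult G lam) :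
    eigMult G lam + numEigs G ≤ Fintype.card V + 1 := by
  set f : End ℝ (V → ℝ) := toLin' (adjM G)
  have hfin := f.finite_hasEigenvalue
  set S := hfin.toFinset.erase lam
  have hS : numEigs G = S.card + 1 := by
    have hlam' : lam ∈ hfin.toFinset := by simpa [f, ← eigMult_pos_iff] using hlam
    rw [Finset.card_erase_add_one hlam']
    simp only [numEigs, eigMult_pos_iff]
    exact Set.ncard_eq_toFinset_card _ hfin
  have hm : eigMult G lam = finrank ℝ (f.eigenspace lam) := eigMult_eq_finrank_eigenspace G lam
  have hdim := f.finrank_eigenspace_add_card_le lam S (Finset.notMem_erase lam _)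
    (fun ν hν => by simpa [S] using Finset.mem_of_mem_erase hν)
  rw [finrank_pi] at hdim
  omega

lemma minDeg_le_degree {V : Type*} [Fintype V] (G : SimpleGraph V) [DecidableRel G.Adj]
    (v : V) : minDeg G ≤ G.degree v :=
  Nat.sInf_le ⟨v, by
    rw [← G.card_neighborSet_eq_degree, Set.ncard_eq_toFinset_card', Set.toFinset_card]⟩

lemma minDeg_lt_card {V : Type*} [Fintype V] [Nonempty V] (G : SimpleGraph V) :
    minDeg G < Fintype.card V := by
  classical
  obtain ⟨v⟩ := ‹Nonempty V›
  exact (minDeg_le_degree G v).trans_lt (G.degree_lt_card_verts v)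

theorem isPDomSet_compl_of_card_add_le (G : SimpleGraph V) {p : ℕ} {X : Finset V}
    (h : X.card + p ≤ minDeg G + 1) : IsPDomSet G p Xᶜ := by
  classical
  intro w hw
  rw [Finset.mem_compl, not_not] at hw
  have hinX : (G.neighborFinset w ∩ X).card + 1 ≤ X.card := by
    rw [← Finset.card_erase_add_one hw, add_le_add_iff_right]
    refine Finset.card_le_card fun u hu => ?_
    rw [Finset.mem_inter, G.mem_neighborFinset] at hu
    exact Finset.mem_erase.2 ⟨hu.1.ne', hu.2⟩
  have hsplit :
      (G.neighborFinset w ∩ X).card + (G.neighborFinset w ∩ Xᶜ).card = G.degree w := by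
    rw [← G.card_neighborFinset_eq_degree, ← Finset.card_union_of_disjoint
      ((disjoint_compl_right (a := X)).mono Finset.inter_subset_right Finset.inter_subset_right),
      ← Finset.inter_union_distrib_left, Finset.union_compl, Finset.inter_univ]
  have hout : (G.neighborSet w ∩ ↑Xᶜ).ncard = (G.neighborFinset w ∩ Xᶜ).card := by
    rw [← Set.ncard_coe_finset, Finset.coe_inter, G.coe_neighborFinset]
  have hdeg := minDeg_le_degree G w
  omega

theorem stmt_10_general (G : SimpleGraph V) (p : ℕ)
    (hs : Fintype.card V - minDeg G + p ≤ numEigs G)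
    (lam : ℝ) (X : Finset V) (hX : IsStarSet G lam X) :
    IsPDomSet G p Xᶜ := by
  obtain ⟨hlam, hcard, -⟩ := hX
  have hbound := eigMult_add_numEigs_le G hlam
  rw [hcard] at hbound hlam
  obtain ⟨v, -⟩ := Finset.card_pos.1 hlam
  have : Nonempty V := ⟨v⟩
  have hδ := minDeg_lt_card G
  exact isPDomSet_compl_of_card_add_le G (by omega)

theorem stmt_10 (G : SimpleGraph V) (p : ℕ) (hp : 0 < p) (hpδ : p ≤ minDeg G)
    (hs : Fintype.card V - minDeg G + p ≤ numEigs G)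
    (lam : ℝ) (X : Finset V) (hX : IsStarSet G lam X) :
    IsPDomSet G p Xᶜ :=
  stmt_10_general G p hs lam X hX
end

section
/- Let λ be an eigenvalue of a connected graph G, and let K be a connected induced subgraph of G not having λ as an eigenvalue. Then G has a connected star complement for λ containing K, i.e., there is a star set X for λ with K ⊆ G−X and G−X connected. -/
open Matrix SimpleGraph

variable {V : Type*} [Fintype V] [DecidableEq V]

/-! Take `Y ⊇ s` maximal such that `G[Y]` is connected and `λ` is not an eigenvalue of `G[Y]`,
and put `X = V ∖ Y`. Since `A(G[Y]) - λ` is invertible, an eigenvector is determined by its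
values on `X`, so `λ` has multiplicity at most `|X|`, with equality exactly when the Schur
complement `S = A_X - λ - Bᵀ (A_Y - λ)⁻¹ B` vanishes. More generally `λ` is not an eigenvalue of
`G[Y ∪ W]` whenever the block of `S` on `W ⊆ X` is nonsingular, so maximality gives `S_uu = 0`
for `u` adjacent to `Y`, and `S_uv = 0` whenever moreover `v` is adjacent to `Y ∪ {u}`. A vertex
`w` at distance two from `Y`, with neighbour `u` adjacent to `Y`, would have `S_uw = A_uw = 1`;
hence every vertex of `X` is adjacent to `Y`, and then `S = 0`. -/

set_option linter.unusedSectionVars false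

lemma SimpleGraph.Connected.induce_insert {α : Type*} {H : SimpleGraph α} {Y : Set α}
    (hY : (H.induce Y).Connected) {u y : α} (hy : y ∈ Y) (hadj : H.Adj u y) :
    (H.induce (insert u Y)).Connected := by
  rw [Set.insert_eq]
  exact connected_induce_union (induce_singleton_eq_top H u ▸ (connected_top ..).preconnected)
    hY.preconnected rfl hy hadj

section Eigenfree

variable {G : SimpleGraph V} {lam : ℝ} {Y : Finset V}

lemma adjM_isSymm (G : SimpleGraph V) : (adjM G).IsSymm := by
  classical
  exact G.isSymm_adjMatrix

lemma adjM_of_adj {i j : V} (h : G.Adj i j) : adjM G i j = 1 := by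
  classical
  simp [adjM, h]

lemma adjM_of_not_adj {i j : V} (h : ¬ G.Adj i j) : adjM G i j = 0 := by
  classical
  simp [adjM, h]

/-- `λ` is not an eigenvalue of `G[Z]`, phrased with vectors on `V` supported on `Z`. -/
def IsEigenfreeOn (G : SimpleGraph V) (lam : ℝ) (Z : Finset V) : Prop :=
  ∀ x : V → ℝ, (∀ i ∉ Z, x i = 0) → (∀ i ∈ Z, ((adjM G - lam • 1) *ᵥ x) i = 0) → x = 0

def IsMaximalConnectedEigenfree (G : SimpleGraph V) (lam : ℝ) (Y : Finset V) : Prop :=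
  ∀ Z : Finset V, Y ⊂ Z → (G.induce (Z : Set V)).Connected → ¬ IsEigenfreeOn G lam Z

lemma sub_smul_one_mulVec_apply (M : Matrix V V ℝ) (x : V → ℝ) (i : V) :
    ((M - lam • 1) *ᵥ x) i = (M *ᵥ x) i - lam * x i := by
  simp [Matrix.sub_mulVec, Matrix.smul_mulVec]

lemma isEigenfreeOn_iff {Z : Finset V} (p : V → Prop) [Fintype {v // p v}]
    (hp : ∀ v, v ∈ Z ↔ p v) :
    IsEigenfreeOn G lam Z ↔ ∀ α : {v // p v} → ℝ,
      (Matrix.of fun i j : {v // p v} => adjM G i.1 j.1) *ᵥ α = lam • α → α = 0 := by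
  classical
  have key : ∀ x : V → ℝ, (∀ i ∉ Z, x i = 0) → ∀ i : {v // p v},
      ((Matrix.of fun i j : {v // p v} => adjM G i.1 j.1) *ᵥ (x ∘ Subtype.val)) i =
        (adjM G *ᵥ x) i := by
    intro x hx i
    have hsum := Finset.sum_subtype (F := ‹_›) Z hp fun v => adjM G i v * x v
    rw [Finset.sum_subset (Finset.subset_univ Z) fun v _ hv => by rw [hx v hv, mul_zero]] at hsum
    exact hsum.symm
  constructor
  · intro h α hα
    let x : V → ℝ := fun v => if hv : p v then α ⟨v, hv⟩ else 0
    have hxα : x ∘ Subtype.val = α := funext fun v => dif_pos v.2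
    have hx : ∀ i ∉ Z, x i = 0 := fun i hi => dif_neg (mt (hp i).2 hi)
    have hx0 := h x hx fun i hi => by
      rw [sub_smul_one_mulVec_apply, ← key x hx ⟨i, (hp i).1 hi⟩, hxα, hα]
      simp [x, (hp i).1 hi]
    rw [← hxα, hx0]
    rfl
  · intro h x hx hxZ
    have hα := h (x ∘ Subtype.val) <| funext fun i => by
      have := hxZ i ((hp i).2 i.2)
      rw [sub_smul_one_mulVec_apply, sub_eq_zero] at this
      simp [key x hx, this]
    funext v
    by_cases hv : v ∈ Z
    · exact congrFun hα ⟨v, (hp v).1 hv⟩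
    · exact hx v hv

/-- `x ↦ ((A - λ) x on Z, x off Z)`: solving `dirichletMap G lam Z x = ξ` is the eigenvalue
equation on `Z` with boundary values `ξ`. -/
noncomputable def dirichletMap (G : SimpleGraph V) (lam : ℝ) (Z : Finset V) :
    (V → ℝ) →ₗ[ℝ] (V → ℝ) :=
  LinearMap.pi fun i => if i ∈ Z then (LinearMap.proj i).comp (toLin' (adjM G - lam • 1))
    else LinearMap.proj i

lemma dirichletMap_apply (Z : Finset V) (x : V → ℝ) (i : V) :
    dirichletMap G lam Z x i = if i ∈ Z then ((adjM G - lam • 1) *ᵥ x) i else x i := by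
  simp only [dirichletMap, LinearMap.pi_apply]
  split_ifs <;> rfl

lemma IsEigenfreeOn.injective_dirichletMap (hY : IsEigenfreeOn G lam Y) :
    Function.Injective (dirichletMap G lam Y) := by
  rw [← LinearMap.ker_eq_bot, LinearMap.ker_eq_bot']
  intro x hx
  refine hY x (fun i hi => ?_) (fun i hi => ?_) <;>
    simpa [dirichletMap_apply, hi] using congrFun hx i

namespace IsEigenfreeOn

variable (hY : IsEigenfreeOn G lam Y)

noncomputable def extendSingle (v : V) : V → ℝ :=
  (LinearEquiv.ofInjectiveEndo _ hY.injective_dirichletMap).symm (Pi.single v 1)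

/-- For `u v ∉ Y`, the `(u, v)` entry of the Schur complement of `A_Y - λ` in `A - λ`. -/
noncomputable def schurCompl (u v : V) : ℝ :=
  ((adjM G - lam • 1) *ᵥ hY.extendSingle v) u

lemma dirichletMap_extendSingle (v : V) :
    dirichletMap G lam Y (hY.extendSingle v) = Pi.single v 1 :=
  LinearEquiv.apply_symm_apply (LinearEquiv.ofInjectiveEndo _ hY.injective_dirichletMap) _

lemma extendSingle_apply_of_notMem {v i : V} (hi : i ∉ Y) :
    hY.extendSingle v i = (Pi.single v 1 : V → ℝ) i := by
  simpa [dirichletMap_apply, hi] using congrFun (hY.dirichletMap_extendSingle v) i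

lemma mulVec_extendSingle_apply_of_mem {v i : V} (hv : v ∉ Y) (hi : i ∈ Y) :
    ((adjM G - lam • 1) *ᵥ hY.extendSingle v) i = 0 := by
  have := congrFun (hY.dirichletMap_extendSingle v) i
  rw [dirichletMap_apply, if_pos hi] at this
  rw [this, Pi.single_apply, if_neg (by rintro rfl; exact hv hi)]

lemma extendSingle_eq_single {w : V} (hw : w ∉ Y) (hwY : ∀ y ∈ Y, ¬ G.Adj y w) :
    hY.extendSingle w = Pi.single w 1 := by
  apply hY.injective_dirichletMap
  rw [dirichletMap_extendSingle]
  funext i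
  by_cases hi : i ∈ Y
  · have hiw : i ≠ w := by rintro rfl; exact hw hi
    simp [dirichletMap_apply, hi, sub_smul_one_mulVec_apply,
      adjM_of_not_adj (hwY i hi), hiw]
  · simp [dirichletMap_apply, hi]

lemma eq_sum_extendSingle {z : V → ℝ} (hz : ∀ i ∈ Y, ((adjM G - lam • 1) *ᵥ z) i = 0) :
    z = ∑ v ∈ Yᶜ, z v • hY.extendSingle v := by
  apply hY.injective_dirichletMap
  simp only [map_sum, map_smul, dirichletMap_extendSingle]
  funext i
  by_cases hi : i ∈ Y <;> simp [dirichletMap_apply, hi, hz, Finset.sum_apply, Pi.single_apply]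

lemma schurCompl_comm {u v : V} (hu : u ∉ Y) (hv : v ∉ Y) :
    hY.schurCompl u v = hY.schurCompl v u := by
  have hdot : ∀ u v, u ∉ Y → v ∉ Y →
      hY.extendSingle u ⬝ᵥ ((adjM G - lam • 1) *ᵥ hY.extendSingle v) = hY.schurCompl u v := by
    intro u v hu hv
    refine Eq.trans ?_ (single_one_dotProduct u _)
    refine Finset.sum_congr rfl fun i _ => ?_
    by_cases hi : i ∈ Y
    · simp [hY.mulVec_extendSingle_apply_of_mem hv hi]
    · rw [hY.extendSingle_apply_of_notMem hi]
  have hsymm : (adjM G - lam • 1).IsSymm := (adjM_isSymm G).sub ((Matrix.isSymm_one).smul lam)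
  rw [← hdot u v hu hv, ← hdot v u hv hu, dotProduct_mulVec, ← mulVec_transpose, hsymm.eq,
    dotProduct_comm]

lemma mulVec_sum_smul_extendSingle_apply {W : Finset V} (c : V → ℝ) (u : V) :
    ((adjM G - lam • 1) *ᵥ ∑ v ∈ W, c v • hY.extendSingle v) u =
      ∑ v ∈ W, c v * hY.schurCompl u v := by
  simp [Matrix.mulVec_sum, Finset.sum_apply, Matrix.mulVec_smul, schurCompl]

lemma union_of_schurCompl_nonsingular {W : Finset V} (hW : Disjoint W Y)
    (hS : ∀ c : V → ℝ, (∀ u ∈ W, ∑ v ∈ W, c v * hY.schurCompl u v = 0) → ∀ v ∈ W, c v = 0) :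
    IsEigenfreeOn G lam (W ∪ Y) := by
  intro z hz hzWY
  have hzsum : z = ∑ v ∈ W, z v • hY.extendSingle v := by
    refine (hY.eq_sum_extendSingle fun i hi => hzWY i (Finset.mem_union_right W hi)).trans
      (Finset.sum_subset (Finset.subset_compl_iff_disjoint_right.2 hW) fun v hv hvW => ?_).symm
    rw [hz v (by simp_all), zero_smul]
  have hc := hS z fun u hu => by
    simpa [← hY.mulVec_sum_smul_extendSingle_apply, ← hzsum] using
      hzWY u (Finset.mem_union_left Y hu)
  rw [hzsum]
  exact Finset.sum_eq_zero fun v hv => by rw [hc v hv, zero_smul]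

lemma eigMult_eq_card_compl (hS : ∀ u ∉ Y, ∀ v ∉ Y, hY.schurCompl u v = 0) :
    eigMult G lam = Yᶜ.card := by
  let K := LinearMap.ker (toLin' (adjM G - lam • 1))
  let r : K →ₗ[ℝ] ((Yᶜ : Finset V) → ℝ) := (LinearMap.funLeft ℝ ℝ Subtype.val).comp K.subtype
  have hr : Function.Bijective r := by
    constructor
    · rw [← LinearMap.ker_eq_bot, LinearMap.ker_eq_bot']
      intro z hz
      refine Subtype.ext <|
        hY z.1 (fun i hi => congrFun hz ⟨i, Finset.mem_compl.2 hi⟩) fun i _ => ?_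
      rw [← toLin'_apply, LinearMap.mem_ker.1 z.2, Pi.zero_apply]
    · intro ζ
      let z := ∑ v : (Yᶜ : Finset V), ζ v • hY.extendSingle v
      have hz : (adjM G - lam • 1) *ᵥ z = 0 := by
        funext i
        simp only [z, Matrix.mulVec_sum, Matrix.mulVec_smul, Finset.sum_apply, Pi.smul_apply]
        refine Finset.sum_eq_zero fun v _ => ?_
        by_cases hi : i ∈ Y
        · rw [hY.mulVec_extendSingle_apply_of_mem (Finset.mem_compl.1 v.2) hi, smul_zero]
        · rw [← schurCompl, hS i hi v (Finset.mem_compl.1 v.2), smul_zero]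
      refine ⟨⟨z, by rw [LinearMap.mem_ker, toLin'_apply, hz]⟩, funext fun u => ?_⟩
      simp only [r, z, LinearMap.comp_apply, Submodule.subtype_apply, LinearMap.funLeft_apply,
        Finset.sum_apply, Pi.smul_apply, hY.extendSingle_apply_of_notMem (Finset.mem_compl.1 u.2)]
      rw [Finset.sum_eq_single u
        (fun v _ hvu => by simp [Subtype.val_injective.ne hvu.symm]) (by simp)]
      simp
  rw [eigMult, (LinearEquiv.ofBijective r hr).finrank_eq, Module.finrank_fintype_fun_eq_card,
    Fintype.card_coe]

lemma insert_of_schurCompl_self_ne_zero {u : V} (hu : u ∉ Y) (h : hY.schurCompl u u ≠ 0) :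
    IsEigenfreeOn G lam (insert u Y) := by
  rw [Finset.insert_eq]
  refine hY.union_of_schurCompl_nonsingular (Finset.disjoint_singleton_left.2 hu) fun c hc => ?_
  simpa [h] using hc

lemma insert_insert_of_schurCompl_ne_zero {u v : V} (hu : u ∉ Y) (hv : v ∉ Y) (huv : u ≠ v)
    (huu : hY.schurCompl u u = 0) (h : hY.schurCompl u v ≠ 0) :
    IsEigenfreeOn G lam (insert v (insert u Y)) := by
  have hvu : hY.schurCompl v u ≠ 0 := hY.schurCompl_comm hu hv ▸ h
  rw [show insert v (insert u Y) = {v, u} ∪ Y by rw [Finset.insert_union, ← Finset.insert_eq]]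
  refine hY.union_of_schurCompl_nonsingular (by simp [hu, hv]) fun c hc => ?_
  simp only [Finset.mem_insert, Finset.mem_singleton, forall_eq_or_imp, forall_eq,
    Finset.sum_pair huv.symm, huu, mul_zero, add_zero] at hc ⊢
  obtain ⟨hcv, hcu⟩ := hc
  have hcv' : c v = 0 := (mul_eq_zero.1 hcu).resolve_right h
  rw [hcv', zero_mul, zero_add] at hcv
  exact ⟨hcv', (mul_eq_zero.1 hcv).resolve_right hvu⟩

lemma schurCompl_self_eq_zero_of_maximal (hYconn : (G.induce (Y : Set V)).Connected)
    (hmax : IsMaximalConnectedEigenfree G lam Y)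
    {u y : V} (hu : u ∉ Y) (hy : y ∈ Y) (hadj : G.Adj u y) : hY.schurCompl u u = 0 := by
  by_contra h
  refine hmax _ (Finset.ssubset_insert hu) ?_ (hY.insert_of_schurCompl_self_ne_zero hu h)
  rw [Finset.coe_insert]
  exact hYconn.induce_insert hy hadj

lemma schurCompl_eq_zero_of_maximal (hYconn : (G.induce (Y : Set V)).Connected)
    (hmax : IsMaximalConnectedEigenfree G lam Y)
    (hdom : ∀ w ∉ Y, ∃ y ∈ Y, G.Adj w y) :
    ∀ u ∉ Y, ∀ v ∉ Y, hY.schurCompl u v = 0 := by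
  intro u hu v hv
  obtain ⟨yu, hyu, hadju⟩ := hdom u hu
  have huu := hY.schurCompl_self_eq_zero_of_maximal hYconn hmax hu hyu hadju
  rcases eq_or_ne u v with rfl | huv
  · exact huu
  by_contra h
  obtain ⟨yv, hyv, hadjv⟩ := hdom v hv
  refine hmax _ ((Finset.ssubset_insert hu).trans_subset (Finset.subset_insert _ _)) ?_
    (hY.insert_insert_of_schurCompl_ne_zero hu hv huv huu h)
  rw [Finset.coe_insert, Finset.coe_insert]
  exact (hYconn.induce_insert hyu hadju).induce_insert (Set.mem_insert_of_mem u hyv) hadjv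

end IsEigenfreeOn

lemma IsEigenfreeOn.exists_adj_of_maximal (hY : IsEigenfreeOn G lam Y) (hG : G.Connected)
    (hYne : Y.Nonempty)
    (hYconn : (G.induce (Y : Set V)).Connected)
    (hmax : IsMaximalConnectedEigenfree G lam Y) :
    ∀ w ∉ Y, ∃ y ∈ Y, G.Adj w y := by
  by_contra! ⟨w₀, hw₀, hw₀Y⟩
  obtain ⟨y₀, hy₀⟩ := hYne
  obtain ⟨⟨⟨w, u⟩, hwu⟩, -, ⟨hw, hwY⟩, hu⟩ :=
    (hG.preconnected w₀ y₀).some.exists_boundary_dart {w | w ∉ Y ∧ ∀ y ∈ Y, ¬ G.Adj w y}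
      ⟨hw₀, hw₀Y⟩ fun h => h.1 hy₀
  have huY : u ∉ Y := fun h => hwY u h hwu
  obtain ⟨y, hy, huy⟩ : ∃ y ∈ Y, G.Adj u y := by simpa [huY] using hu
  have huu := hY.schurCompl_self_eq_zero_of_maximal hYconn hmax huY hy huy
  -- `w` has no neighbour in `Y`, so its extension is `Pi.single w 1` itself
  have huw : hY.schurCompl u w = 1 := by
    rw [schurCompl, hY.extendSingle_eq_single hw fun y hy h => hwY y hy h.symm]
    simp [sub_smul_one_mulVec_apply, adjM_of_adj hwu.symm, hwu.ne.symm]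
  refine hmax _ ((Finset.ssubset_insert huY).trans_subset (Finset.subset_insert _ _)) ?_
    (hY.insert_insert_of_schurCompl_ne_zero huY hw hwu.ne.symm huu (by simp [huw]))
  rw [Finset.coe_insert, Finset.coe_insert]
  exact (hYconn.induce_insert hy huy).induce_insert (Set.mem_insert u _) hwu

lemma exists_maximal_connected_isEigenfreeOn {s : Finset V}
    (hs : (G.induce (s : Set V)).Connected) (hsfree : IsEigenfreeOn G lam s) :
    ∃ Y, s ⊆ Y ∧ (G.induce (Y : Set V)).Connected ∧ IsEigenfreeOn G lam Y ∧
      IsMaximalConnectedEigenfree G lam Y := by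
  classical
  obtain ⟨Y, hY, hmax⟩ := (Finset.univ.filter fun Z : Finset V =>
      s ⊆ Z ∧ (G.induce (Z : Set V)).Connected ∧ IsEigenfreeOn G lam Z).exists_max_image
    Finset.card ⟨s, by simp [hs, hsfree]⟩
  simp only [Finset.mem_filter, Finset.mem_univ, true_and] at hY hmax
  refine ⟨Y, hY.1, hY.2.1, hY.2.2, fun Z hYZ hZ hZfree => ?_⟩
  exact (Finset.card_lt_card hYZ).not_ge (hmax Z ⟨hY.1.trans hYZ.subset, hZ, hZfree⟩)

end Eigenfree

theorem stmt_14 (G : SimpleGraph V) (hG : G.Connected) (lam : ℝ)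
    (heig : 0 < eigMult G lam) (s : Finset V)
    (hKconn : (G.induce (↑s : Set V)).Connected)
    (hKnotEig : ∀ α : {v : V // v ∈ s} → ℝ,
      (Matrix.of fun i j : {v : V // v ∈ s} => adjM G i.1 j.1).mulVec α = lam • α → α = 0) :
    ∃ X : Finset V, IsStarSet G lam X ∧ (∀ v ∈ s, v ∉ X) ∧
      (G.induce {v : V | v ∉ X}).Connected := by
  obtain ⟨Y, hsY, hYconn, hY, hmax⟩ := exists_maximal_connected_isEigenfreeOn hKconn
    ((isEigenfreeOn_iff _ fun _ => Iff.rfl).2 hKnotEig)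
  have hYne : Y.Nonempty := hKconn.nonempty.elim fun v => ⟨v, hsY v.2⟩
  have hdom := hY.exists_adj_of_maximal hG hYne hYconn hmax
  have hS := hY.schurCompl_eq_zero_of_maximal hYconn hmax hdom
  refine ⟨Yᶜ, ⟨heig, hY.eigMult_eq_card_compl hS, ?_⟩, fun v hv => by simpa using hsY hv, ?_⟩
  · exact (isEigenfreeOn_iff _ fun v => by simp).1 hY
  · rwa [show {v | v ∉ Yᶜ} = (Y : Set V) by ext; simp]
end

section
/- Let G be a graph of order n with p-domination number γ_p > p, and suppose G has a minimum p-dominating set X such that for every p-element subset S of X there is a vertex u ∉ X with N(u) ∩ X = S. Then for any adjacency eigenvalue λ of G, γ_p(G) ≤ n − m_G(λ). -/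
open Matrix SimpleGraph

variable {V : Type*} [Fintype V] [DecidableEq V]

set_option linter.unusedSectionVars false

lemma adjM_apply (G : SimpleGraph V) (u v : V) [Decidable (G.Adj u v)] :
    adjM G u v = if G.Adj u v then 1 else 0 := by
  simp [adjM, SimpleGraph.adjMatrix]

lemma adjM_mulVec (G : SimpleGraph V) [DecidableRel G.Adj] (α : V → ℝ) (u : V) :
    (adjM G).mulVec α u = ∑ v ∈ G.neighborFinset u, α v := by
  rw [Matrix.mulVec, dotProduct]
  rw [Finset.sum_congr rfl (fun v _ => by rw [adjM_apply, ite_mul, one_mul, zero_mul])]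
  rw [Finset.sum_ite, Finset.sum_const_zero, add_zero]
  congr 1
  ext v
  simp [SimpleGraph.neighborFinset]

/- combinatorial core -/
lemma comb_core (p : ℕ) (hp1 : 1 ≤ p) (X : Finset V) (hcard : p + 1 ≤ X.card)
    (α : V → ℝ) (h0 : ∀ v ∉ X, α v = 0)
    (hsum : ∀ T ⊆ X, T.card = p → ∑ x ∈ T, α x = 0) : α = 0 := by
  have hconst : ∀ x ∈ X, ∀ y ∈ X, α x = α y := by
    intro x hx y hy
    by_cases hxy : x = y
    · rw [hxy]
    · have hsub : p - 1 ≤ (X \ {x, y}).card := by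
        have := Finset.le_card_sdiff ({x, y}) X
        have h2 : ({x, y} : Finset V).card ≤ 2 := Finset.card_insert_le _ _ |>.trans (by simp)
        omega
      obtain ⟨S, hSsub, hScard⟩ := Finset.exists_subset_card_eq hsub
      have hxS : x ∉ S := fun h => by
        have := hSsub h; simp at this
      have hyS : y ∉ S := fun h => by
        have := hSsub h; simp at this
      have hSX : S ⊆ X := hSsub.trans (Finset.sdiff_subset)
      have h1 : ∑ z ∈ insert x S, α z = 0 := by
        apply hsum _ (Finset.insert_subset hx hSX)
        rw [Finset.card_insert_of_notMem hxS, hScard]; omega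
      have h2 : ∑ z ∈ insert y S, α z = 0 := by
        apply hsum _ (Finset.insert_subset hy hSX)
        rw [Finset.card_insert_of_notMem hyS, hScard]; omega
      rw [Finset.sum_insert hxS] at h1
      rw [Finset.sum_insert hyS] at h2
      linarith
  have hzero : ∀ x ∈ X, α x = 0 := by
    obtain ⟨T, hTsub, hTcard⟩ := Finset.exists_subset_card_eq (le_of_lt (Nat.lt_of_lt_of_le (Nat.lt_succ_self p) hcard) : p ≤ X.card)
    have hTne : T.Nonempty := Finset.card_pos.1 (by omega)
    obtain ⟨t, ht⟩ := hTne
    have hsumT := hsum T hTsub hTcard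
    have : ∑ x ∈ T, α x = T.card • α t := by
      rw [← Finset.sum_const]
      exact Finset.sum_congr rfl fun x hx => hconst x (hTsub hx) t (hTsub ht)
    rw [this, hTcard] at hsumT
    have hαt : α t = 0 := by
      have : (p : ℝ) * α t = 0 := by
        simpa [nsmul_eq_mul] using hsumT
      rcases mul_eq_zero.1 this with h | h
      · exact absurd h (by positivity)
      · exact h
    intro x hx
    rw [hconst x hx t (hTsub ht), hαt]
  funext v
  by_cases hv : v ∈ X
  · exact hzero v hv
  · exact h0 v hv

theorem stmt_19 (G : SimpleGraph V) (p : ℕ) (hp : p < pDomNum G p)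
    (X : Finset V) (hXdom : IsPDomSet G p X) (hXmin : X.card = pDomNum G p)
    (hpriv : ∀ T ⊆ X, T.card = p →
      ∃ u : V, u ∉ X ∧ G.neighborSet u ∩ ↑X = ↑T)
    (lam : ℝ) (heig : 0 < eigMult G lam) :
    pDomNum G p ≤ Fintype.card V - eigMult G lam := by
  classical
  have hp1 : 1 ≤ p := by
    rcases Nat.eq_zero_or_pos p with h | h
    · exfalso
      have h0 : pDomNum G p = 0 := by
        subst h
        have hmem : (0:ℕ) ∈ {k | ∃ D : Finset V, IsPDomSet G 0 D ∧ D.card = k} :=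
          ⟨∅, fun v _ => Nat.zero_le _, Finset.card_empty⟩
        exact Nat.le_zero.1 (Nat.sInf_le hmem)
      omega
    · exact h
  have hcard : p + 1 ≤ X.card := by omega
  have key : eigMult G lam ≤ Fintype.card V - X.card := by
    set M := adjM G - lam • (1 : Matrix V V ℝ) with hM
    set W := LinearMap.ker (Matrix.toLin' M) with hW
    let f : W →ₗ[ℝ] ({v : V // v ∉ X} → ℝ) :=
      (LinearMap.funLeft ℝ ℝ (fun v : {v : V // v ∉ X} => (v : V))).comp W.subtype
    have hinj : Function.Injective f := by
      rw [← LinearMap.ker_eq_bot, LinearMap.ker_eq_bot']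
      rintro ⟨α, hα⟩ hf
      have h0 : ∀ v ∉ X, α v = 0 := fun v hv => congrFun hf ⟨v, hv⟩
      have hMα : M.mulVec α = 0 := by
        have := LinearMap.mem_ker.1 hα
        rwa [Matrix.toLin'_apply] at this
      have heigvec : (adjM G).mulVec α = lam • α := by
        have : (adjM G).mulVec α - lam • α = 0 := by
          rw [hM, Matrix.sub_mulVec, Matrix.smul_mulVec, Matrix.one_mulVec] at hMα
          exact hMα
        linear_combination (norm := module) this
      have hnb : ∀ u ∉ X, ∑ v ∈ G.neighborFinset u, α v = 0 := by
        intro u hu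
        have := congrFun heigvec u
        rw [adjM_mulVec] at this
        rw [this, Pi.smul_apply, h0 u hu, smul_zero]
      have hsum : ∀ T ⊆ X, T.card = p → ∑ x ∈ T, α x = 0 := by
        intro T hT hTc
        obtain ⟨u, hu, hNu⟩ := hpriv T hT hTc
        have hfin : G.neighborFinset u ∩ X = T := by
          apply Finset.coe_injective
          rw [Finset.coe_inter, SimpleGraph.neighborFinset_def, Set.coe_toFinset, hNu]
        have hsplit := Finset.sum_inter_add_sum_sdiff (G.neighborFinset u) X α
        rw [hfin, hnb u hu] at hsplit
        have hzero : ∑ v ∈ G.neighborFinset u \ X, α v = 0 :=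
          Finset.sum_eq_zero fun v hv => h0 v (Finset.mem_sdiff.1 hv).2
        linarith
      have := comb_core p hp1 X hcard α h0 hsum
      exact Subtype.ext this
    calc eigMult G lam = Module.finrank ℝ W := rfl
      _ ≤ Module.finrank ℝ ({v : V // v ∉ X} → ℝ) :=
          LinearMap.finrank_le_finrank_of_injective hinj
      _ = Fintype.card {v : V // v ∉ X} := Module.finrank_fintype_fun_eq_card ℝ
      _ = Fintype.card V - X.card := by
          rw [Fintype.card_subtype_compl]
          simp
  have hXle : X.card ≤ Fintype.card V := by
    simpa using Finset.card_le_univ X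
  omega
end
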